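/- For all real numbers α, p with 0 < α < 1 and 0 < p < 1 and real c with 1 < c < 2, there exists N₀ such that for every N ≥ N₀ there exists an N-dimensional cooperative Boolean network that is p-c-chaotic and exhibits p-α-decoherence. -/

import Mathlib

/-- The state space of an `N`-dimensional Boolean network. -/
abbrev BState (N : ℕ) := Fin N → Bool

/-- The attractor (eventual periodic orbit) reached from initial condition `s`:
the set of states visited infinitely often by the trajectory `t ↦ f^[t] s`. -/
def attractor {N : ℕ} (f : BState N → BState N) (s : BState N) : Set (BState N) :=
  {x | ∀ T : ℕ, ∃ t ≥ T, f^[t] s = x}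

/-- The network `f` is `p`-`c`-chaotic: more than `p·2^N` initial conditions
reach an attractor of length `> c^N`. -/
def pcChaotic {N : ℕ} (f : BState N → BState N) (p c : ℝ) : Prop :=
  p * 2 ^ N < (({s : BState N | (c : ℝ) ^ N < ((attractor f s).ncard : ℝ)}).ncard : ℝ)

/-- Ordered pairs of states at Hamming distance exactly 1. -/
def PerturbPairs (N : ℕ) : Set (BState N × BState N) :=
  {q | hammingDist q.1 q.2 = 1}

/-- `p`-coalescence: more than `p·N·2^N` perturbation pairs have trajectories that
coincide at some positive time. -/
def pCoalescent {N : ℕ} (f : BState N → BState N) (p : ℝ) : Prop :=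
  p * ((N : ℝ) * 2 ^ N) <
    (({q ∈ PerturbPairs N | ∃ t > 0, f^[t] q.1 = f^[t] q.2}).ncard : ℝ)

/-- `p`-instability: at least `p·N·2^N` perturbation pairs reach different attractors. -/
def pUnstable {N : ℕ} (f : BState N → BState N) (p : ℝ) : Prop :=
  p * ((N : ℝ) * 2 ^ N) ≤
    (({q ∈ PerturbPairs N | attractor f q.1 ≠ attractor f q.2}).ncard : ℝ)

/-- Coordinate `j` is an input of coordinate `i` of `f` (equivalently, `i` is an
output of `j`): the `i`-th coordinate of `f` depends on the `j`-th coordinate. -/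
def isInput {N : ℕ} (f : BState N → BState N) (j i : Fin N) : Prop :=
  ∃ s s' : BState N, (∀ k, k ≠ j → s k = s' k) ∧ f s i ≠ f s' i

/-- Every coordinate has at most 2 inputs and at most 2 outputs. -/
def biQuadratic {N : ℕ} (f : BState N → BState N) : Prop :=
  ∀ i : Fin N, ({j | isInput f j i}.ncard ≤ 2) ∧ ({j | isInput f i j}.ncard ≤ 2)

/-- Bi-quadratic and every coordinate has exactly 2 inputs. -/
def strictlyBiQuadratic {N : ℕ} (f : BState N → BState N) : Prop :=
  biQuadratic f ∧ ∀ i : Fin N, {j | isInput f j i}.ncard = 2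

/-- `p`-`α`-decoherence: at least `p·N·2^N` perturbation pairs have Hamming distance
`≥ α·N` at infinitely many times `t > 0`. -/
def pAlphaDecoherent {N : ℕ} (f : BState N → BState N) (p α : ℝ) : Prop :=
  p * ((N : ℝ) * 2 ^ N) ≤
    (({q ∈ PerturbPairs N |
        ∀ T : ℕ, ∃ t > T,
          α * N ≤ (hammingDist (f^[t] q.1) (f^[t] q.2) : ℝ)}).ncard : ℝ)

/-- `p`-`α`-`q`-decoherence: at least `p·N·2^N` perturbation pairs are such that, for
all sufficiently large `t*`, the Hamming distance is `≥ α·N` on at least a proportion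
`q` of the times `t ∈ {0, …, t*}`. -/
def pAlphaQDecoherent {N : ℕ} (f : BState N → BState N) (p α q : ℝ) : Prop :=
  p * ((N : ℝ) * 2 ^ N) ≤
    (({r ∈ PerturbPairs N |
        ∃ T₀ : ℕ, ∀ tstar : ℕ, T₀ ≤ tstar →
          q * ((tstar : ℝ) + 1) ≤
            (({t : ℕ | t ≤ tstar ∧
                α * N ≤ (hammingDist (f^[t] r.1) (f^[t] r.2) : ℝ)}).ncard : ℝ)}).ncard : ℝ)

/-!
The orbit states `orbitState d t` (level `d < r`, time `t` modulo `r * L`) increase with the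
level and are incomparable across times, so `orbitState d t ↦ orbitState d (t + 1)` extends to a
monotone map of the cube (`orbitExtension`): a state below the orbit goes to the join of the
successors of the orbit states below it, a state only above it goes to `⊤`, and a state
incomparable with the whole orbit enters it at a level read off from its weight. Almost all
states are of the last kind and reach the whole cycle, whose length is at least the number `L`
of half-size subsets of the `N - O(ε N)` payload coordinates, so `L ≥ 2 ^ (N - O(ε N)) / N > c ^ N`
for small `ε`. Once per period the payload of each level is constant, `true` or `false` according
as the phase is at most the level, so two trajectories on different levels then differ on all
`N - O(ε N) ≥ α N` payload coordinates. With `r ≈ ε N / 3` levels, Chebyshev's inequality for the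
weight shows that for all but a vanishing fraction of perturbation pairs both states are generic
and have their weights in the window where the level is injective, so they sit on different
levels.
-/

open Finset

section OrbitExtension

variable {α ι : Type*} [CompleteLattice α]

open Classical in
noncomputable def orbitExtension (v : ι → α) (σ : ι → ι) (g : α → α) (x : α) : α :=
  if ∃ i, x ≤ v i then ⨆ (i) (_ : v i ≤ x), v (σ i)
  else if ∃ i, v i ≤ x then ⊤ else g x

theorem monotone_orbitExtension (v : ι → α) (σ : ι → ι) {g : α → α} (hg : Monotone g) :
    Monotone (orbitExtension v σ g) := by
  intro x y hxy
  unfold orbitExtension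
  by_cases hy : ∃ i, y ≤ v i
  · rw [if_pos (hy.imp fun i h => hxy.trans h), if_pos hy]
    exact iSup₂_le fun i hi => le_iSup₂_of_le i (hi.trans hxy) le_rfl
  by_cases hy' : ∃ i, v i ≤ y
  · rw [if_neg hy, if_pos hy']
    exact le_top
  have hx' : ¬∃ i, v i ≤ x := fun ⟨i, hi⟩ => hy' ⟨i, hi.trans hxy⟩
  rw [if_neg hy, if_neg hy', if_neg hx']
  split_ifs
  · exact iSup₂_le fun i hi => (hx' ⟨i, hi⟩).elim
  · exact hg hxy

theorem orbitExtension_apply_orbit {v : ι → α} {σ : ι → ι} (g : α → α)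
    (hσ : ∀ i j, v i ≤ v j → v (σ i) ≤ v (σ j)) (j : ι) :
    orbitExtension v σ g (v j) = v (σ j) := by
  rw [orbitExtension, if_pos ⟨j, le_rfl⟩]
  exact le_antisymm (iSup₂_le fun i hi => hσ i j hi) (le_iSup₂_of_le j le_rfl le_rfl)

theorem orbitExtension_apply_of_incomparable (v : ι → α) (σ : ι → ι) (g : α → α) {x : α}
    (hx : ∀ i, ¬x ≤ v i ∧ ¬v i ≤ x) : orbitExtension v σ g x = g x := by
  rw [orbitExtension, if_neg fun ⟨i, hi⟩ => (hx i).1 hi, if_neg fun ⟨i, hi⟩ => (hx i).2 hi]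

end OrbitExtension

theorem attractor_eq_range {N P : ℕ} (hP : 0 < P) {f : BState N → BState N} {x : BState N}
    {u : ℕ → BState N} (hu : Function.Periodic u P) (hx : ∀ t, 0 < t → f^[t] x = u t) :
    attractor f x = Set.range u := by
  ext y
  constructor
  · intro hy
    obtain ⟨t, ht, rfl⟩ := hy 1
    exact ⟨t, (hx t ht).symm⟩
  · rintro ⟨t, rfl⟩ T
    refine ⟨t + (T + 1) * P, by nlinarith, ?_⟩
    rw [hx _ (by nlinarith)]
    simpa using hu.nat_mul (T + 1) t

theorem hammingDist_update_of_ne {ι : Type*} {β : ι → Type*} [Fintype ι] [DecidableEq ι]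
    [∀ i, DecidableEq (β i)] (x : ∀ i, β i) {i : ι} {b : β i} (hb : b ≠ x i) :
    hammingDist x (Function.update x i b) = 1 := by
  rw [hammingDist, card_eq_one]
  refine ⟨i, ext fun j => ?_⟩
  by_cases hj : j = i
  · subst hj; simp [hb.symm]
  · simp [hj]

theorem two_pow_le_succ_mul_choose_half (M : ℕ) : 2 ^ M ≤ (M + 1) * M.choose (M / 2) := by
  rw [← Nat.sum_range_choose]
  simpa using sum_le_sum fun i (_ : i ∈ range (M + 1)) => Nat.choose_le_middle i M

theorem pow_lt_of_two_pow_le_succ_mul {c L : ℝ} {N h : ℕ} (hc : 0 ≤ c) (hh : h ≤ N)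
    (hL : (2 : ℝ) ^ (N - h) ≤ ((N - h : ℕ) + 1) * L) (hcN : c ^ N * (N + 1) * 2 ^ h < 2 ^ N) :
    c ^ N < L := by
  have hM : ((N - h : ℕ) : ℝ) + 1 ≤ N + 1 := by
    have : ((N - h : ℕ) : ℝ) ≤ N := by exact_mod_cast Nat.sub_le N h
    linarith
  have key : c ^ N * (((N - h : ℕ) : ℝ) + 1) * 2 ^ h < ((N - h : ℕ) + 1) * L * 2 ^ h :=
    calc c ^ N * (((N - h : ℕ) : ℝ) + 1) * 2 ^ h ≤ c ^ N * (N + 1) * 2 ^ h := by gcongr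
      _ < 2 ^ N := hcN
      _ = 2 ^ (N - h) * 2 ^ h := (pow_sub_mul_pow 2 hh).symm
      _ ≤ ((N - h : ℕ) + 1) * L * 2 ^ h := by gcongr
  have := lt_of_mul_lt_mul_right key (by positivity)
  nlinarith

section Asymptotics

open Filter Topology

theorem exists_pos_lt_and_mul_two_rpow_lt {a c : ℝ} (ha : 0 < a) (hc : c < 2) :
    ∃ ε > 0, ε < a ∧ c * 2 ^ ε < 2 := by
  have hcont : Continuous fun ε : ℝ => c * 2 ^ ε :=
    continuous_const.mul (continuous_const.rpow continuous_id fun _ => Or.inl two_ne_zero)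
  have h := (eventually_lt_nhds ha).and ((hcont.tendsto' 0 c (by simp)).eventually_lt_const hc)
  obtain ⟨ε, ⟨hεa, hεc⟩, hε⟩ :=
    ((h.filter_mono nhdsWithin_le_nhds).and self_mem_nhdsWithin).exists (f := 𝓝[>] (0 : ℝ))
  exact ⟨ε, hε, hεa, hεc⟩

theorem eventually_mul_le_natCast {a b k : ℝ} (hab : b < 1 - a) :
    ∀ᶠ N : ℕ in atTop, a * N + b * N + k ≤ N := by
  filter_upwards [tendsto_natCast_atTop_atTop.eventually_ge_atTop (k / (1 - a - b))] with N hN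
  rw [div_le_iff₀ (by linarith)] at hN
  linarith

theorem eventually_le_mul_sq_natCast {a : ℝ} (ha : 0 < a) (k : ℝ) :
    ∀ᶠ N : ℕ in atTop, k * N ≤ a * N ^ 2 := by
  filter_upwards [tendsto_natCast_atTop_atTop.eventually_ge_atTop (k / a)] with N hN
  rw [div_le_iff₀ ha] at hN
  nlinarith [Nat.cast_nonneg (α := ℝ) N]

theorem eventually_pow_mul_two_rpow_lt {c ε : ℝ} (hc : 0 < c) (hcε : c * 2 ^ ε < 2) (k : ℝ) :
    ∀ᶠ N : ℕ in atTop, c ^ N * (N + 1) * 2 ^ (ε * N + k) < 2 ^ N := by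
  set ρ := c * 2 ^ ε / 2
  have hρ0 : 0 ≤ ρ := by positivity
  have hρ1 : ρ < 1 := by rw [div_lt_one two_pos]; exact hcε
  have ht : Tendsto (fun N : ℕ => (N + 1) * ρ ^ N * 2 ^ k) atTop (𝓝 0) := by
    have := ((tendsto_self_mul_const_pow_of_lt_one hρ0 hρ1).add
      (tendsto_pow_atTop_nhds_zero_of_lt_one hρ0 hρ1)).mul_const ((2 : ℝ) ^ k)
    simpa [add_mul] using this
  filter_upwards [ht.eventually_lt_const one_pos] with N hN
  have : c ^ N * (N + 1) * 2 ^ (ε * N + k) = (N + 1) * ρ ^ N * 2 ^ k * 2 ^ N := by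
    rw [Real.rpow_add two_pos, Real.rpow_mul two_pos.le, Real.rpow_natCast, div_pow, mul_pow]
    field_simp
  rw [this]
  nlinarith [pow_pos (two_pos (α := ℝ)) N]

end Asymptotics

namespace BooleanNetwork

variable {N : ℕ}

theorem card_bState : Fintype.card (BState N) = 2 ^ N := by simp

theorem card_filter_le_val_lt {a b : ℕ} (h : b ≤ N) :
    #{i : Fin N | a ≤ i.val ∧ i.val < b} = b - a := by
  rw [← Nat.card_Ico a b, ← card_map Fin.valEmbedding]
  congr 1
  ext j
  simp only [mem_map, mem_filter, mem_univ, true_and, Fin.valEmbedding_apply, mem_Ico]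
  exact ⟨fun ⟨i, hi, hij⟩ => hij ▸ hi, fun hj => ⟨⟨j, by omega⟩, hj, rfl⟩⟩

def weight (x : BState N) : ℕ := #{i | x i = true}

theorem weight_mono : Monotone (weight (N := N)) := fun _ _ hxy =>
  card_le_card fun i hi => by
    simp only [mem_filter, mem_univ, true_and] at hi ⊢
    exact Bool.le_iff_imp.mp (hxy i) hi

def flipAt (x : BState N) (i : Fin N) : BState N := Function.update x i (!x i)

@[simp]
theorem flipAt_flipAt (x : BState N) (i : Fin N) : flipAt (flipAt x i) i = x := by
  simp [flipAt]

theorem flipAt_injective (x : BState N) : Function.Injective (flipAt x) := fun i j h => by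
  by_contra hij
  simpa [flipAt, Function.update_of_ne hij] using congrFun h i

theorem hammingDist_flipAt (x : BState N) (i : Fin N) : hammingDist x (flipAt x i) = 1 :=
  hammingDist_update_of_ne x (Bool.not_ne_self _)

theorem weight_flipAt_of_eq_false {x : BState N} {i : Fin N} (hx : x i = false) :
    weight (flipAt x i) = weight x + 1 := by
  have : filter (fun j => flipAt x i j = true) univ =
      insert i (filter (fun j => x j = true) univ) := by
    ext j
    simp only [mem_filter, mem_univ, true_and, mem_insert, flipAt, Function.update_apply]
    split_ifs with hj <;> simp [hj, hx]
  rw [weight, this, card_insert_of_notMem (by simp [hx]), weight]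

theorem weight_flipAt_ne (x : BState N) (i : Fin N) : weight (flipAt x i) ≠ weight x := by
  cases hx : x i
  · simp [weight_flipAt_of_eq_false hx]
  · have : flipAt x i i = false := by simp [flipAt, hx]
    have h := weight_flipAt_of_eq_false this
    rw [flipAt_flipAt] at h
    omega

theorem card_filter_forall_eq (s : Finset (Fin N)) (b : Bool) :
    #{x : BState N | ∀ i ∈ s, x i = b} = 2 ^ (N - #s) := by
  have : ({x : BState N | ∀ i ∈ s, x i = b} : Finset _) =
      Fintype.piFinset fun i => if i ∈ s then {b} else univ := by
    ext x
    simp only [mem_filter, mem_univ, true_and, Fintype.mem_piFinset]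
    refine forall_congr' fun i => ?_
    split_ifs with hi <;> simp [hi]
  simp only [this, Fintype.card_piFinset, apply_ite card, card_singleton, card_univ,
    Fintype.card_bool]
  rw [prod_ite, prod_const_one, one_mul, prod_const]
  simp [filter_notMem_eq_sdiff, card_sdiff]

def spin (b : Bool) : ℤ := if b then 1 else -1

theorem two_mul_weight_sub_eq_sum_spin (x : BState N) :
    2 * (weight x : ℤ) - N = ∑ i, spin (x i) := by
  have h : ∀ i, spin (x i) = 2 * (if x i = true then 1 else 0) - 1 := fun i => by
    cases x i <;> rfl
  simp only [h, sum_sub_distrib, ← mul_sum, sum_boole, weight, sum_const, card_univ,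
    Fintype.card_fin, nsmul_eq_mul, mul_one]

theorem sum_spin_mul_spin {i j : Fin N} (hij : i ≠ j) :
    ∑ x : BState N, spin (x i) * spin (x j) = 0 := by
  refine sum_involution (fun x _ => flipAt x i) (fun x _ => ?_) (fun x _ _ h => ?_)
    (fun _ _ => mem_univ _) (fun x _ => flipAt_flipAt x i)
  · simp only [flipAt, Function.update_self, Function.update_of_ne hij.symm]
    cases x i <;> cases x j <;> rfl
  · simpa [flipAt] using congrFun h i

theorem sum_sq_two_mul_weight_sub :
    ∑ x : BState N, (2 * (weight x : ℤ) - N) ^ 2 = (N : ℤ) * 2 ^ N := by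
  have hsq : ∀ b, spin b * spin b = 1 := by decide
  calc ∑ x : BState N, (2 * (weight x : ℤ) - N) ^ 2
      = ∑ i, ∑ j, ∑ x : BState N, spin (x i) * spin (x j) := by
        simp only [two_mul_weight_sub_eq_sum_spin, pow_two, sum_mul_sum]
        rw [sum_comm]
        exact sum_congr rfl fun i _ => sum_comm
    _ = ∑ i, ∑ x : BState N, spin (x i) * spin (x i) :=
        sum_congr rfl fun i _ => sum_eq_single_of_mem i (mem_univ i)
          fun j _ hji => sum_spin_mul_spin (Ne.symm hji)
    _ = N * 2 ^ N := by simp [hsq]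

theorem card_mul_sq_le_of_le_abs_two_mul_weight_sub (k : ℕ) :
    (#{x : BState N | (k : ℤ) ≤ |2 * (weight x : ℤ) - N|} : ℤ) * k ^ 2 ≤ N * 2 ^ N := by
  rw [← sum_sq_two_mul_weight_sub, ← nsmul_eq_mul]
  refine (card_nsmul_le_sum _ _ _ fun x hx => ?_).trans
    (sum_le_sum_of_subset_of_nonneg (subset_univ _) fun _ _ _ => sq_nonneg _)
  exact (pow_le_pow_left₀ k.cast_nonneg (mem_filter.mp hx).2 2).trans (sq_abs _).le

theorem mul_two_pow_le_card_avoiding_add (S : Finset (BState N)) :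
    N * 2 ^ N ≤ #{q : BState N × Fin N | q.1 ∉ S ∧ flipAt q.1 q.2 ∉ S} + 2 * (N * #S) := by
  have hS : #{q : BState N × Fin N | q.1 ∈ S} = N * #S := by
    rw [show filter (fun q : BState N × Fin N => q.1 ∈ S) univ = S ×ˢ univ by ext; simp,
      card_product, card_univ, Fintype.card_fin, mul_comm]
  have hflip : #{q : BState N × Fin N | flipAt q.1 q.2 ∈ S} = N * #S := by
    rw [← hS]
    exact card_nbij' (fun q => (flipAt q.1 q.2, q.2)) (fun q => (flipAt q.1 q.2, q.2))
      (fun q hq => by simpa using hq) (fun q hq => by simpa using hq) (fun q _ => by simp)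
      (fun q _ => by simp)
  have hcover : (univ : Finset (BState N × Fin N)) ⊆
      filter (fun q => q.1 ∉ S ∧ flipAt q.1 q.2 ∉ S) univ ∪
        (filter (fun q => q.1 ∈ S) univ ∪ filter (fun q => flipAt q.1 q.2 ∈ S) univ) := by
    intro q _
    simp only [mem_union, mem_filter, mem_univ, true_and]
    tauto
  have := (card_le_card hcover).trans
    ((card_union_le _ _).trans (add_le_add_right (card_union_le _ _) _))
  rw [card_univ, Fintype.card_prod, card_bState, Fintype.card_fin, hS, hflip] at this
  linarith

structure Layout (N : ℕ) where
  r : ℕ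
  n : ℕ
  L : ℕ
  core : Fin L → Finset (Fin N)
  two_le_r : 2 ≤ r
  L_pos : 0 < L
  three_mul_add_two_mul_le : 3 * r + 2 * n ≤ N
  le_val_of_mem_core : ∀ a, ∀ i ∈ core a, 3 * r + 2 * n ≤ i.val
  eq_of_core_subset : ∀ a b, core a ⊆ core b → a = b

namespace Layout

variable (A : Layout N)

def period : ℕ := A.r * A.L

def block (t : ℕ) : Fin A.L := ⟨t / A.r % A.L, Nat.mod_lt _ A.L_pos⟩

def IsDive (t : ℕ) : Prop := t / A.r % A.L = 0

instance : DecidablePred A.IsDive := fun _ => Nat.decEq _ _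

def code (t : ℕ) : ℕ := 2 * (t % A.r) + if A.IsDive t then 1 else 0

/-- The state at level `d` and time `t` of the cycle. Coordinates `[0, 2r)` carry a one-hot
code of the phase `t % r` and of the dive flag, the next `n` coordinates are `true` and the
following `n` are `false`, then come `r` coordinates holding `d` in unary, and the remaining
payload coordinates hold the core of the current block, except in the dive block, where they
are all `true` or all `false` according as the phase is at most the level or not. The dive flag
is part of the code because an all-`false` dive payload lies below every core. -/
def orbitState (d t : ℕ) : BState N := fun i =>
  if i.val < 2 * A.r then decide (i.val = A.code t)
  else if i.val < 2 * A.r + A.n then true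
  else if i.val < 2 * A.r + 2 * A.n then false
  else if i.val < 3 * A.r + 2 * A.n then decide (i.val ≤ 2 * A.r + 2 * A.n + d)
  else if A.IsDive t then decide (t % A.r ≤ d) else decide (i ∈ A.core (A.block t))

variable {A}

theorem orbitState_code {d t : ℕ} {i : Fin N} (h : i.val < 2 * A.r) :
    A.orbitState d t i = decide (i.val = A.code t) := by
  rw [orbitState, if_pos h]

theorem orbitState_pinTrue {d t : ℕ} {i : Fin N} (h₁ : 2 * A.r ≤ i.val)
    (h₂ : i.val < 2 * A.r + A.n) : A.orbitState d t i = true := by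
  rw [orbitState, if_neg (by omega), if_pos h₂]

theorem orbitState_pinFalse {d t : ℕ} {i : Fin N} (h₁ : 2 * A.r + A.n ≤ i.val)
    (h₂ : i.val < 2 * A.r + 2 * A.n) : A.orbitState d t i = false := by
  rw [orbitState, if_neg (by omega), if_neg (by omega), if_pos h₂]

theorem orbitState_level {d t : ℕ} {i : Fin N} (h₁ : 2 * A.r + 2 * A.n ≤ i.val)
    (h₂ : i.val < 3 * A.r + 2 * A.n) :
    A.orbitState d t i = decide (i.val ≤ 2 * A.r + 2 * A.n + d) := by
  rw [orbitState, if_neg (by omega), if_neg (by omega), if_neg (by omega), if_pos h₂]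

theorem orbitState_payload {d t : ℕ} {i : Fin N} (h : 3 * A.r + 2 * A.n ≤ i.val) :
    A.orbitState d t i =
      if A.IsDive t then decide (t % A.r ≤ d) else decide (i ∈ A.core (A.block t)) := by
  rw [orbitState, if_neg (by omega), if_neg (by omega), if_neg (by omega), if_neg (by omega)]

theorem orbitState_mono_level {d d' : ℕ} (hd : d ≤ d') (t : ℕ) :
    A.orbitState d t ≤ A.orbitState d' t := by
  intro i
  refine Bool.le_iff_imp.mpr fun hi => ?_
  simp only [orbitState] at hi ⊢
  split_ifs at hi ⊢ <;> simp_all <;> omega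

theorem orbitState_periodic (d : ℕ) : Function.Periodic (A.orbitState d) A.period := by
  intro t
  have hdiv : (t + A.period) / A.r = t / A.r + A.L := by
    rw [period, Nat.add_mul_div_left _ _ (by have := A.two_le_r; omega)]
  have hmod : (t + A.period) % A.r = t % A.r := by rw [period, Nat.add_mul_mod_self_left]
  have hblock : A.block (t + A.period) = A.block t := by
    simp [block, hdiv]
  have hdive : A.IsDive (t + A.period) ↔ A.IsDive t := by
    simp [IsDive, hdiv]
  have hcode : A.code (t + A.period) = A.code t := by
    simp [code, hmod, hdive]
  funext i
  simp only [orbitState, hcode, hblock, hmod, hdive]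

theorem code_lt (t : ℕ) : A.code t < 2 * A.r := by
  have := Nat.mod_lt t (show 0 < A.r by have := A.two_le_r; omega)
  unfold code
  split_ifs <;> omega

theorem mod_eq_and_le_of_orbitState_le {d d' t t' : ℕ} (hd : d < A.r)
    (h : A.orbitState d t ≤ A.orbitState d' t') :
    t % A.period = t' % A.period ∧ d ≤ d' := by
  have hN := A.three_mul_add_two_mul_le
  have hcode : A.code t = A.code t' := by
    have hlt := A.code_lt t
    have hi : (⟨A.code t, by omega⟩ : Fin N).val < 2 * A.r := hlt
    have := Bool.le_iff_imp.mp (h ⟨A.code t, by omega⟩)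
    simpa [orbitState_code hi] using this
  have hphase : t % A.r = t' % A.r := by
    unfold code at hcode
    split_ifs at hcode <;> omega
  have hdive : A.IsDive t ↔ A.IsDive t' := by
    unfold code at hcode
    split_ifs at hcode with h₁ h₂ h₂ <;> first | omega | simp [h₁, h₂]
  have hblock : t / A.r % A.L = t' / A.r % A.L := by
    by_cases ht : A.IsDive t
    · exact ht.trans (hdive.mp ht).symm
    · have hsub : A.core (A.block t) ⊆ A.core (A.block t') := fun i hi => by
        have hle := A.le_val_of_mem_core _ i hi
        have := Bool.le_iff_imp.mp (h i)
        simpa [orbitState_payload hle, ht, hdive.not.mp ht, hi] using this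
      exact congrArg Fin.val (A.eq_of_core_subset _ _ hsub)
  refine ⟨by rw [period, Nat.mod_mul, Nat.mod_mul, hphase, hblock], ?_⟩
  have := Bool.le_iff_imp.mp (h ⟨2 * A.r + 2 * A.n + d, by omega⟩)
  rw [orbitState_level (by simp) (by simp; omega), orbitState_level (by simp) (by simp; omega)]
    at this
  simpa using this

variable (A)

-- Centred so that `level` is injective on the weights `w` with `|2 w - N| < r - 1`.
def level (x : BState N) : ℕ := min (A.r - 1) (weight x - (N - A.r) / 2)

noncomputable def network : BState N → BState N :=
  orbitExtension (fun i : Fin A.r × ℕ => A.orbitState i.1 i.2) (fun i => (i.1, i.2 + 1))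
    fun x => A.orbitState (A.level x) 1

def pinTrue : Finset (Fin N) := {i | 2 * A.r ≤ i.val ∧ i.val < 2 * A.r + A.n}

def pinFalse : Finset (Fin N) := {i | 2 * A.r + A.n ≤ i.val ∧ i.val < 2 * A.r + 2 * A.n}

def IsGeneric (x : BState N) : Prop :=
  (∃ i ∈ A.pinTrue, x i = false) ∧ ∃ i ∈ A.pinFalse, x i = true

instance : DecidablePred A.IsGeneric := fun _ => instDecidableAnd

def IsTypical (x : BState N) : Prop :=
  A.IsGeneric x ∧ |2 * (weight x : ℤ) - N| < (A.r - 1 : ℕ)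

instance : DecidablePred A.IsTypical := fun _ => instDecidableAnd

variable {A}

theorem n_le : A.n ≤ N := by have := A.three_mul_add_two_mul_le; omega

theorem period_pos : 0 < A.period := Nat.mul_pos (by have := A.two_le_r; omega) A.L_pos

theorem level_lt (x : BState N) : A.level x < A.r := by
  have := A.two_le_r
  unfold level
  omega

theorem level_mono : Monotone A.level := fun _ _ hxy => by
  have := weight_mono hxy
  unfold level
  omega

theorem monotone_network : Monotone A.network :=
  monotone_orbitExtension _ _ fun _ _ hxy => orbitState_mono_level (level_mono hxy) 1

theorem network_orbitState {d : ℕ} (hd : d < A.r) (t : ℕ) :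
    A.network (A.orbitState d t) = A.orbitState d (t + 1) := by
  refine orbitExtension_apply_orbit (v := fun i : Fin A.r × ℕ => A.orbitState i.1 i.2) _
    (fun i j h => ?_) (⟨d, hd⟩, t)
  obtain ⟨hmod, hle⟩ := mod_eq_and_le_of_orbitState_le i.1.isLt h
  have hmod' : (i.2 + 1) % A.period = (j.2 + 1) % A.period := by
    rw [Nat.add_mod, hmod, ← Nat.add_mod]
  rw [← (orbitState_periodic _).map_mod_nat (i.2 + 1), hmod',
    (orbitState_periodic _).map_mod_nat]
  exact orbitState_mono_level hle _

theorem iterate_network_orbitState {d : ℕ} (hd : d < A.r) (t k : ℕ) :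
    A.network^[k] (A.orbitState d t) = A.orbitState d (t + k) := by
  induction k with
  | zero => rfl
  | succ k ih => rw [Function.iterate_succ_apply', ih, network_orbitState hd, add_assoc]

theorem incomparable_orbitState_of_isGeneric {x : BState N} (hx : A.IsGeneric x) (d t : ℕ) :
    ¬x ≤ A.orbitState d t ∧ ¬A.orbitState d t ≤ x := by
  obtain ⟨⟨i, hi, hxi⟩, ⟨j, hj, hxj⟩⟩ := hx
  simp only [pinTrue, pinFalse, mem_filter, mem_univ, true_and] at hi hj
  refine ⟨fun h => ?_, fun h => ?_⟩
  · simpa [orbitState_pinFalse hj.1 hj.2] using Bool.le_iff_imp.mp (h j) hxj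
  · simpa [hxi] using Bool.le_iff_imp.mp (h i) (orbitState_pinTrue hi.1 hi.2)

theorem iterate_network_of_isGeneric {x : BState N} (hx : A.IsGeneric x) {t : ℕ} (ht : 0 < t) :
    A.network^[t] x = A.orbitState (A.level x) t := by
  obtain ⟨k, rfl⟩ := Nat.exists_eq_add_of_lt ht
  rw [Function.iterate_succ_apply, network,
    orbitExtension_apply_of_incomparable _ _ _ fun i => incomparable_orbitState_of_isGeneric hx _ _,
    ← network, iterate_network_orbitState (level_lt x)]
  ring_nf

theorem period_le_ncard_attractor {x : BState N} (hx : A.IsGeneric x) :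
    A.period ≤ (attractor A.network x).ncard := by
  rw [attractor_eq_range period_pos (orbitState_periodic _)
    fun t ht => iterate_network_of_isGeneric hx ht]
  have hinj : Set.InjOn (A.orbitState (A.level x)) (range A.period) := fun t ht t' ht' h => by
    have := (mod_eq_and_le_of_orbitState_le (level_lt x) h.le).1
    rwa [Nat.mod_eq_of_lt (mem_range.mp ht), Nat.mod_eq_of_lt (mem_range.mp ht')] at this
  simpa using Set.ncard_le_ncard_of_injOn _ (fun t _ => Set.mem_range_self t) hinj

theorem le_hammingDist_orbitState {d d' t : ℕ} (hdive : A.IsDive t) (h₁ : d < t % A.r)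
    (h₂ : t % A.r ≤ d') :
    N - (3 * A.r + 2 * A.n) ≤ hammingDist (A.orbitState d t) (A.orbitState d' t) := by
  rw [← card_filter_le_val_lt le_rfl]
  refine card_le_card fun i hi => ?_
  simp only [mem_filter, mem_univ, true_and] at hi ⊢
  rw [orbitState_payload hi.1, orbitState_payload hi.1]
  simp [hdive]
  omega

theorem exists_gt_le_hammingDist_iterate {x y : BState N} (hx : A.IsGeneric x)
    (hy : A.IsGeneric y) (hxy : A.level x < A.level y) (T : ℕ) :
    ∃ t > T, N - (3 * A.r + 2 * A.n) ≤ hammingDist (A.network^[t] x) (A.network^[t] y) := by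
  have hr := level_lt (A := A) y
  have hP := period_pos (A := A)
  -- a time in the dive block whose phase is `level x + 1`
  set t := A.level x + 1 + A.r * ((T + 1) * A.L) with ht
  have hphase : t % A.r = A.level x + 1 := by
    rw [ht, Nat.add_mul_mod_self_left, Nat.mod_eq_of_lt (by omega)]
  have hdive : A.IsDive t := by
    rw [IsDive, ht, Nat.add_mul_div_left _ _ (by omega), Nat.div_eq_of_lt (by omega), zero_add,
      Nat.mul_mod_left]
  have hT : T < t := by
    have : A.r * ((T + 1) * A.L) = (T + 1) * A.period := by rw [period]; ring
    nlinarith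
  refine ⟨t, hT, ?_⟩
  rw [iterate_network_of_isGeneric hx (by omega), iterate_network_of_isGeneric hy (by omega)]
  exact le_hammingDist_orbitState hdive (by omega) (by omega)

theorem exists_gt_le_hammingDist_iterate_of_level_ne {x y : BState N} (hx : A.IsGeneric x)
    (hy : A.IsGeneric y) (hxy : A.level x ≠ A.level y) (T : ℕ) :
    ∃ t > T, N - (3 * A.r + 2 * A.n) ≤ hammingDist (A.network^[t] x) (A.network^[t] y) := by
  rcases hxy.lt_or_gt with h | h
  · exact exists_gt_le_hammingDist_iterate hx hy h T
  · simpa only [hammingDist_comm] using exists_gt_le_hammingDist_iterate hy hx h T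

theorem card_not_isGeneric_le : #{x : BState N | ¬A.IsGeneric x} ≤ 2 * 2 ^ (N - A.n) := by
  have hN := A.three_mul_add_two_mul_le
  have hsub : filter (fun x : BState N => ¬A.IsGeneric x) univ ⊆
      filter (fun x => ∀ i ∈ A.pinTrue, x i = true) univ ∪
        filter (fun x => ∀ i ∈ A.pinFalse, x i = false) univ := fun x hx => by
    simpa [IsGeneric, or_iff_not_imp_left] using hx
  have hT : #A.pinTrue = A.n := by rw [pinTrue, card_filter_le_val_lt (by omega)]; omega
  have hF : #A.pinFalse = A.n := by rw [pinFalse, card_filter_le_val_lt (by omega)]; omega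
  calc _ ≤ _ := card_le_card hsub
    _ ≤ _ := card_union_le _ _
    _ = 2 * 2 ^ (N - A.n) := by rw [card_filter_forall_eq, card_filter_forall_eq, hT, hF]; ring

theorem level_flipAt_ne {x : BState N} {i : Fin N} (hx : A.IsTypical x)
    (hy : A.IsTypical (flipAt x i)) : A.level x ≠ A.level (flipAt x i) := by
  have := weight_flipAt_ne x i
  have hx := abs_lt.mp hx.2
  have hy := abs_lt.mp hy.2
  unfold level
  omega

theorem pcChaotic_network {p c : ℝ} (hc : c ^ N < A.L) (hn : 2 < (1 - p) * 2 ^ A.n) :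
    pcChaotic A.network p c := by
  have hsub : (↑(filter A.IsGeneric univ) : Set (BState N)) ⊆
      {x | c ^ N < (attractor A.network x).ncard} := fun x hx => by
    have hL : A.L ≤ A.period := Nat.le_mul_of_pos_left _ (by have := A.two_le_r; omega)
    have := period_le_ncard_attractor (mem_filter.mp hx).2
    exact hc.trans_le (by exact_mod_cast hL.trans this)
  have hcount : (2 : ℝ) ^ N ≤ #(filter A.IsGeneric univ) + 2 * 2 ^ (N - A.n) := by
    have := card_filter_add_card_filter_not (s := (univ : Finset (BState N))) A.IsGeneric
    rw [card_univ, card_bState] at this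
    have := card_not_isGeneric_le (A := A)
    exact_mod_cast (by omega : 2 ^ N ≤ #(filter A.IsGeneric univ) + 2 * 2 ^ (N - A.n))
  have hbad : 2 * 2 ^ (N - A.n) < (1 - p) * 2 ^ N := by
    rw [← pow_sub_mul_pow 2 A.n_le, mul_left_comm, mul_comm 2]
    exact mul_lt_mul_of_pos_left hn (by positivity)
  unfold pcChaotic
  calc p * 2 ^ N < 2 ^ N - 2 * 2 ^ (N - A.n) := by linarith
    _ ≤ #(filter A.IsGeneric univ) := by linarith
    _ ≤ _ := by
      rw [← Set.ncard_coe_finset]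
      exact_mod_cast Set.ncard_le_ncard hsub (Set.toFinite _)

theorem two_mul_card_not_isTypical_le {p : ℝ} (hn : 8 ≤ (1 - p) * 2 ^ A.n)
    (hr : 4 * N ≤ (1 - p) * (A.r - 1 : ℕ) ^ 2) :
    2 * (#{x : BState N | ¬A.IsTypical x} : ℝ) ≤ (1 - p) * 2 ^ N := by
  set far : Finset (BState N) := {x | ((A.r - 1 : ℕ) : ℤ) ≤ |2 * (weight x : ℤ) - N|}
  have hfar : 4 * (#far : ℝ) ≤ (1 - p) * 2 ^ N := by
    have hk : (0 : ℝ) < (A.r - 1 : ℕ) := by have := A.two_le_r; norm_cast; omega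
    have h := (Int.cast_le (R := ℝ)).mpr
      (card_mul_sq_le_of_le_abs_two_mul_weight_sub (N := N) (A.r - 1))
    push_cast at h
    refine le_of_mul_le_mul_right ?_ (pow_pos hk 2)
    nlinarith [pow_pos (two_pos (α := ℝ)) N]
  have hgen : 4 * (#{x : BState N | ¬A.IsGeneric x} : ℝ) ≤ (1 - p) * 2 ^ N := by
    have h : (#{x : BState N | ¬A.IsGeneric x} : ℝ) ≤ 2 * 2 ^ (N - A.n) := by
      exact_mod_cast card_not_isGeneric_le
    rw [← pow_sub_mul_pow 2 A.n_le]
    nlinarith [pow_pos (two_pos (α := ℝ)) (N - A.n)]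
  have hsplit : filter (fun x => ¬A.IsTypical x) univ =
      filter (fun x => ¬A.IsGeneric x) univ ∪ far := by
    ext x
    simp [far, IsTypical, imp_iff_not_or]
  have : (#{x : BState N | ¬A.IsTypical x} : ℝ) ≤ #{x : BState N | ¬A.IsGeneric x} + #far := by
    rw [hsplit]
    exact_mod_cast card_union_le _ _
  linarith

theorem pAlphaDecoherent_network {p α : ℝ} (hα : α * N ≤ (N - (3 * A.r + 2 * A.n) : ℕ))
    (hn : 8 ≤ (1 - p) * 2 ^ A.n) (hr : 4 * N ≤ (1 - p) * (A.r - 1 : ℕ) ^ 2) :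
    pAlphaDecoherent A.network p α := by
  unfold pAlphaDecoherent
  set D : Set (BState N × BState N) := {q ∈ PerturbPairs N | ∀ T : ℕ, ∃ t > T,
    α * N ≤ (hammingDist (A.network^[t] q.1) (A.network^[t] q.2) : ℝ)}
  set S : Finset (BState N) := {x | ¬A.IsTypical x}
  have hS : 2 * (#S : ℝ) ≤ (1 - p) * 2 ^ N := two_mul_card_not_isTypical_le hn hr
  set G : Finset (BState N × Fin N) := {q | q.1 ∉ S ∧ flipAt q.1 q.2 ∉ S}
  have hpairs : (N : ℝ) * 2 ^ N ≤ #G + 2 * (N * #S) := by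
    exact_mod_cast mul_two_pow_le_card_avoiding_add S
  have hmaps : ∀ q ∈ (G : Set (BState N × Fin N)), (q.1, flipAt q.1 q.2) ∈ D := by
    rintro ⟨x, i⟩ hq
    simp only [G, S, coe_filter, mem_filter, mem_univ, true_and, not_not] at hq
    obtain ⟨hx, hy⟩ := hq
    refine ⟨hammingDist_flipAt x i, fun T => ?_⟩
    obtain ⟨t, ht, hd⟩ :=
      exists_gt_le_hammingDist_iterate_of_level_ne hx.1 hy.1 (level_flipAt_ne hx hy) T
    exact ⟨t, ht, hα.trans (by exact_mod_cast hd)⟩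
  have hinj : Set.InjOn (fun q : BState N × Fin N => (q.1, flipAt q.1 q.2)) G :=
    fun q _ q' _ h => by
      simp only [Prod.mk.injEq] at h
      obtain ⟨h₁, h₂⟩ := h
      rw [← h₁] at h₂
      exact Prod.ext h₁ (flipAt_injective _ h₂)
  have hG : (#G : ℝ) ≤ D.ncard := by
    rw [← Set.ncard_coe_finset]
    exact_mod_cast Set.ncard_le_ncard_of_injOn _ hmaps hinj (Set.toFinite _)
  nlinarith [mul_le_mul_of_nonneg_left hS (Nat.cast_nonneg N : (0 : ℝ) ≤ N)]

end Layout

theorem exists_layout {N r n : ℕ} (hr : 2 ≤ r) (h : 3 * r + 2 * n ≤ N) :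
    ∃ A : Layout N, A.r = r ∧ A.n = n ∧
      2 ^ (N - (3 * r + 2 * n)) ≤ (N - (3 * r + 2 * n) + 1) * A.L := by
  set M := N - (3 * r + 2 * n)
  set E : Finset (Fin N) := {i | 3 * r + 2 * n ≤ i.val ∧ i.val < N}
  set 𝒜 := E.powersetCard (M / 2)
  have h𝒜 : ∀ a : Fin #𝒜, (𝒜.equivFin.symm a).1 ⊆ E ∧ #(𝒜.equivFin.symm a).1 = M / 2 :=
    fun a => mem_powersetCard.mp (𝒜.equivFin.symm a).2
  have hcard : #𝒜 = M.choose (M / 2) := by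
    rw [card_powersetCard, card_filter_le_val_lt le_rfl]
  let A : Layout N :=
    { r := r
      n := n
      L := #𝒜
      core := fun a => (𝒜.equivFin.symm a).1
      two_le_r := hr
      L_pos := hcard ▸ Nat.choose_pos (Nat.div_le_self M 2)
      three_mul_add_two_mul_le := h
      le_val_of_mem_core := fun a i hi => (mem_filter.mp ((h𝒜 a).1 hi)).2.1
      eq_of_core_subset := fun a b hab => 𝒜.equivFin.symm.injective <| Subtype.ext <|
        eq_of_subset_of_card_le hab ((h𝒜 b).2.trans (h𝒜 a).2.symm).le }
  refine ⟨A, rfl, rfl, ?_⟩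
  show 2 ^ M ≤ (M + 1) * #𝒜
  exact hcard ▸ two_pow_le_succ_mul_choose_half M

theorem exists_chaotic_decoherent_network {α p c ε : ℝ} {N n : ℕ} (hα0 : 0 ≤ α)
    (hε : 0 < ε) (hc0 : 0 < c) (hα : α * N + ε * N + (6 + 2 * n) ≤ N)
    (hc : c ^ N * (N + 1) * 2 ^ (ε * N + (6 + 2 * n)) < 2 ^ N)
    (hn : 8 ≤ (1 - p) * 2 ^ n) (hr : 36 * N ≤ (1 - p) * (ε * N) ^ 2) :
    ∃ f : BState N → BState N, Monotone f ∧ pcChaotic f p c ∧ pAlphaDecoherent f p α := by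
  set r := ⌊ε * N / 3⌋₊ + 2
  have hfloor : ε * N / 3 < ⌊ε * N / 3⌋₊ + 1 := Nat.lt_floor_add_one _
  have hh : ((3 * r + 2 * n : ℕ) : ℝ) ≤ ε * N + (6 + 2 * n) := by
    have := Nat.floor_le (by positivity : 0 ≤ ε * N / 3)
    simp only [r]
    push_cast
    linarith
  have hhN : 3 * r + 2 * n ≤ N := by
    have : ((3 * r + 2 * n : ℕ) : ℝ) ≤ N := by nlinarith [Nat.cast_nonneg (α := ℝ) N]
    exact_mod_cast this
  obtain ⟨A, hAr, hAn, hL⟩ := exists_layout (by omega : 2 ≤ r) hhN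
  have hcL : c ^ N < A.L := by
    refine pow_lt_of_two_pow_le_succ_mul hc0.le hhN (by exact_mod_cast hL) (lt_of_le_of_lt ?_ hc)
    rw [← Real.rpow_natCast 2 (3 * r + 2 * n)]
    gcongr
    exact one_le_two
  have hp : 0 < 1 - p := pos_of_mul_pos_left (by linarith) (by positivity : (0 : ℝ) ≤ 2 ^ n)
  have hr' : 4 * N ≤ (1 - p) * ((A.r - 1 : ℕ) : ℝ) ^ 2 := by
    have : ε * N / 3 ≤ ((A.r - 1 : ℕ) : ℝ) := by
      rw [hAr]
      simp only [r]
      push_cast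
      linarith
    calc (4 * N : ℝ) ≤ (1 - p) * (ε * N / 3) ^ 2 := by nlinarith
      _ ≤ (1 - p) * ((A.r - 1 : ℕ) : ℝ) ^ 2 := by gcongr
  refine ⟨A.network, Layout.monotone_network, Layout.pcChaotic_network hcL (hAn ▸ by linarith),
    Layout.pAlphaDecoherent_network ?_ (hAn ▸ hn) hr'⟩
  rw [hAr, hAn, Nat.cast_sub hhN]
  linarith

end BooleanNetwork

theorem cooperative_chaotic_alpha_decoherent_exists_general
    (α p : ℝ) (hα0 : 0 < α) (hα1 : α < 1) (hp1 : p < 1)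
    (c : ℝ) (hc1 : 1 < c) (hc2 : c < 2) :
    ∃ N₀ : ℕ, ∀ N : ℕ, N₀ ≤ N →
      ∃ f : BState N → BState N,
        Monotone f ∧ pcChaotic f p c ∧ pAlphaDecoherent f p α := by
  open BooleanNetwork Filter in
  obtain ⟨n, hn⟩ : ∃ n : ℕ, 8 / (1 - p) < 2 ^ n := pow_unbounded_of_one_lt _ one_lt_two
  rw [div_lt_iff₀ (by linarith)] at hn
  obtain ⟨ε, hε, hεα, hεc⟩ := exists_pos_lt_and_mul_two_rpow_lt (sub_pos.mpr hα1) hc2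
  obtain ⟨N₀, hN₀⟩ := eventually_atTop.mp <|
    (eventually_mul_le_natCast (k := 6 + 2 * n) hεα).and <|
    (eventually_pow_mul_two_rpow_lt (by linarith) hεc (6 + 2 * n)).and <|
    eventually_le_mul_sq_natCast (mul_pos (sub_pos.mpr hp1) (pow_pos hε 2)) 36
  refine ⟨N₀, fun N hN => ?_⟩
  obtain ⟨hlin, hexp, hsq⟩ := hN₀ N hN
  exact exists_chaotic_decoherent_network hα0.le hε (by linarith) hlin hexp (by linarith)
    (by linarith [mul_pow ε (N : ℝ) 2])

/-- Theorem 3.7: for `0 < α, p < 1 < c < 2`, all sufficiently large `N` admit a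
cooperative `p`-`c`-chaotic network exhibiting `p`-`α`-decoherence. -/
theorem cooperative_chaotic_alpha_decoherent_exists
    (α p : ℝ) (hα0 : 0 < α) (hα1 : α < 1) (hp0 : 0 < p) (hp1 : p < 1)
    (c : ℝ) (hc1 : 1 < c) (hc2 : c < 2) :
    ∃ N₀ : ℕ, ∀ N : ℕ, N₀ ≤ N →
      ∃ f : BState N → BState N,
        Monotone f ∧ pcChaotic f p c ∧ pAlphaDecoherent f p α :=
  cooperative_chaotic_alpha_decoherent_exists_general α p hα0 hα1 hp1 c hc1 hc2
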